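/- For every finite-state machine N = (S, A, T) (possibly with silent moves), rooted branching bisimilarity ≈_c on places is an equivalence relation. -/
import Mathlib


/- Common framework: finite-state machines (FSMs) in the sense of Gorrieri.
   Places form a type `S`, labels a type `A` with a distinguished silent label `tau`.
   A transition is a triple `(s, ℓ, m) : S × A × Option S`, where the post-set `m`
   is either a single place (`some s'`) or the empty marking θ (`none`).
   An FSM is given by a finite set `T` of such transitions. -/

variable {S A : Type*}

/-- `Tr T s ℓ m` : place `s` has a transition labeled `ℓ` to post-set `m` (a place or θ). -/
def Tr (T : Finset (S × A × Option S)) (s : S) (ℓ : A) (m : Option S) : Prop :=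
  (s, ℓ, m) ∈ T

/-- `SilentReach T tau s m` : `s ⇒ε m`, the reflexive–transitive closure of silent moves. -/
inductive SilentReach (T : Finset (S × A × Option S)) (tau : A) : S → Option S → Prop
  | refl (s : S) : SilentReach T tau s (some s)
  | step {s s' : S} {m : Option S} :
      SilentReach T tau s (some s') → Tr T s' tau m → SilentReach T tau s m

/-- Lift of a place relation to `Option S`; a pair involving θ (`none`) is related
    only when both components are θ. -/
def OptRel (R : S → S → Prop) : Option S → Option S → Prop
  | some a, some b => R a b
  | none, none => True
  | _, _ => False

/-- `R` is a branching bisimulation on the FSM with transitions `T` and silent label `tau`. -/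
def IsBranchingBisim (T : Finset (S × A × Option S)) (tau : A) (R : S → S → Prop) : Prop :=
  ∀ s1 s2, R s1 s2 →
    (∀ ℓ m1, Tr T s1 ℓ m1 →
        (ℓ = tau ∧ ∃ m2, SilentReach T tau s2 m2 ∧ OptRel R (some s1) m2 ∧ OptRel R m1 m2) ∨
        (∃ s m2, SilentReach T tau s2 (some s) ∧ Tr T s ℓ m2 ∧ R s1 s ∧ OptRel R m1 m2)) ∧
    (∀ ℓ m2, Tr T s2 ℓ m2 →
        (ℓ = tau ∧ ∃ m1, SilentReach T tau s1 m1 ∧ OptRel R m1 (some s2) ∧ OptRel R m1 m2) ∨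
        (∃ s m1, SilentReach T tau s1 (some s) ∧ Tr T s ℓ m1 ∧ R s s2 ∧ OptRel R m1 m2))

/-- Branching bisimilarity on places: `s ≈ s'` iff some branching bisimulation relates them. -/
def Bisimilar (T : Finset (S × A × Option S)) (tau : A) (s s' : S) : Prop :=
  ∃ R, IsBranchingBisim T tau R ∧ R s s'

/-- Rooted branching bisimilarity `≈_c` on places. -/
def RootedBisimilar (T : Finset (S × A × Option S)) (tau : A) (s1 s2 : S) : Prop :=
  ∀ ℓ : A,
    (∀ m1, Tr T s1 ℓ m1 → ∃ m2, Tr T s2 ℓ m2 ∧ OptRel (Bisimilar T tau) m1 m2) ∧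
    (∀ m2, Tr T s2 ℓ m2 → ∃ m1, Tr T s1 ℓ m1 ∧ OptRel (Bisimilar T tau) m1 m2)

/-- The post-set of a transition, as a marking (multiset). -/
def mpost (m : Option S) : Multiset S :=
  m.elim 0 (fun s => {s})

variable [DecidableEq S] [DecidableEq A]

/-- `Fires T m t m'` : transition `t` is enabled at marking `m` (`•t ∈ m`) and its
    firing produces `m' = (m ⊖ •t) ⊕ t•`. -/
def Fires (T : Finset (S × A × Option S)) (m : Multiset S) (t : S × A × Option S)
    (m' : Multiset S) : Prop :=
  t ∈ T ∧ t.1 ∈ m ∧ m' = m.erase t.1 + mpost t.2.2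

/-- `MStep T m ℓ m'` : marking `m` evolves to `m'` by firing some `ℓ`-labeled transition. -/
def MStep (T : Finset (S × A × Option S)) (m : Multiset S) (ℓ : A) (m' : Multiset S) : Prop :=
  ∃ t, Fires T m t m' ∧ t.2.1 = ℓ

/-- `Reach T m m'` : `m' ∈ reach(m)`, i.e. `m'` is reachable from `m` by a firing sequence. -/
def Reach (T : Finset (S × A × Option S)) : Multiset S → Multiset S → Prop :=
  Relation.ReflTransGen (fun m m' => ∃ t, Fires T m t m')

/-- The additive closure `R^⊕` of a place relation `R`, relating markings. -/
inductive AddClosure (R : S → S → Prop) : Multiset S → Multiset S → Prop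
  | zero : AddClosure R 0 0
  | cons {s1 s2 : S} {m1 m2 : Multiset S} :
      R s1 s2 → AddClosure R m1 m2 → AddClosure R (s1 ::ₘ m1) (s2 ::ₘ m2)

/-- The restricted net `N \ H`: all transitions with a label in `H` are pruned.
    (Places `s\H` of the restricted net are identified with the places `s` of `N`.) -/
def restrictNet (T : Finset (S × A × Option S)) (H : Finset A) : Finset (S × A × Option S) :=
  T.filter (fun t => t.2.1 ∉ H)

/-- `DNI T tau H m0` : for all markings `m1, m2` reachable from `m0` and every `h ∈ H`
    with `m1 →h m2`, the restricted markings are branching team equivalent in `N \ H`. -/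
def DNI (T : Finset (S × A × Option S)) (tau : A) (H : Finset A) (m0 : Multiset S) : Prop :=
  ∀ m1 m2, Reach T m0 m1 → Reach T m0 m2 →
    ∀ h ∈ H, MStep T m1 h m2 → AddClosure (Bisimilar (restrictNet T H) tau) m1 m2

/-- `FiresSeq T m σ m'` : the transition sequence `σ` can fire from `m` ending in `m'`. -/
inductive FiresSeq (T : Finset (S × A × Option S)) : Multiset S → List (S × A × Option S) → Multiset S → Prop
  | nil (m : Multiset S) : FiresSeq T m [] m
  | cons {m m' m'' : Multiset S} {t : S × A × Option S} {σ : List (S × A × Option S)} :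
      Fires T m t m' → FiresSeq T m' σ m'' → FiresSeq T m (t :: σ) m''

section Aux

variable {S A : Type*}

theorem silentReach_trans {T : Finset (S × A × Option S)} {tau : A} {s z : S} {m : Option S}
    (h1 : SilentReach T tau s (some z)) (h2 : SilentReach T tau z m) :
    SilentReach T tau s m := by
  induction h2 with
  | refl => exact h1
  | step h t ih => exact SilentReach.step ih t

theorem optRel_flip {R : S → S → Prop} {a b : Option S} :
    OptRel (flip R) a b ↔ OptRel R b a := by
  cases a <;> cases b <;> simp [OptRel, flip]

theorem optRel_comp {R1 R2 : S → S → Prop} {a b c : Option S}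
    (h1 : OptRel R1 a b) (h2 : OptRel R2 b c) : OptRel (Relation.Comp R1 R2) a c := by
  cases a <;> cases b <;> cases c <;> simp_all [OptRel, Relation.Comp]
  exact ⟨_, h1, h2⟩

theorem optRel_congr {R R' : S → S → Prop} (h : ∀ a b, R a b ↔ R' a b) {a b : Option S}
    (hr : OptRel R a b) : OptRel R' a b := by
  cases a <;> cases b <;> simp_all [OptRel]

/-- Forward clause of a branching bisimulation. -/
def Fwd (T : Finset (S × A × Option S)) (tau : A) (R : S → S → Prop) : Prop :=
  ∀ s1 s2, R s1 s2 → ∀ ℓ m1, Tr T s1 ℓ m1 →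
    (ℓ = tau ∧ ∃ m2, SilentReach T tau s2 m2 ∧ OptRel R (some s1) m2 ∧ OptRel R m1 m2) ∨
    (∃ s m2, SilentReach T tau s2 (some s) ∧ Tr T s ℓ m2 ∧ R s1 s ∧ OptRel R m1 m2)

theorem fwd_congr {T : Finset (S × A × Option S)} {tau : A} {R R' : S → S → Prop}
    (h : ∀ a b, R a b ↔ R' a b) (hf : Fwd T tau R) : Fwd T tau R' := by
  intro s1 s2 hr ℓ m1 ht
  rcases hf s1 s2 ((h s1 s2).2 hr) ℓ m1 ht with ⟨hτ, m2, hre, h1, h2⟩ | ⟨s, m2, hre, ht2, h1, h2⟩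
  · exact Or.inl ⟨hτ, m2, hre, optRel_congr h h1, optRel_congr h h2⟩
  · exact Or.inr ⟨s, m2, hre, ht2, (h s1 s).1 h1, optRel_congr h h2⟩

theorem isBB_iff {T : Finset (S × A × Option S)} {tau : A} {R : S → S → Prop} :
    IsBranchingBisim T tau R ↔ (Fwd T tau R ∧ Fwd T tau (flip R)) := by
  constructor
  · intro h
    constructor
    · intro s1 s2 hr; exact (h s1 s2 hr).1
    · intro s2 s1 hr ℓ m2 ht
      rcases (h s1 s2 hr).2 ℓ m2 ht with ⟨hτ, m1, hre, h1, h2⟩ | ⟨s, m1, hre, ht1, h1, h2⟩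
      · exact Or.inl ⟨hτ, m1, hre, optRel_flip.2 h1, optRel_flip.2 h2⟩
      · exact Or.inr ⟨s, m1, hre, ht1, h1, optRel_flip.2 h2⟩
  · rintro ⟨hf, hb⟩ s1 s2 hr
    refine ⟨hf s1 s2 hr, fun ℓ m2 ht => ?_⟩
    rcases hb s2 s1 hr ℓ m2 ht with ⟨hτ, m1, hre, h1, h2⟩ | ⟨s, m1, hre, ht1, h1, h2⟩
    · exact Or.inl ⟨hτ, m1, hre, optRel_flip.1 h1, optRel_flip.1 h2⟩
    · exact Or.inr ⟨s, m1, hre, ht1, h1, optRel_flip.1 h2⟩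

/-- Stuttering lemma: a silent path on the left can be matched on the right. -/
theorem reach_match {T : Finset (S × A × Option S)} {tau : A} {R : S → S → Prop}
    (hf : Fwd T tau R) {s s2 : S} {m : Option S} (hre : SilentReach T tau s m) :
    ∀ n : S, m = some n → R s s2 → ∃ z, SilentReach T tau s2 (some z) ∧ R n z := by
  induction hre with
  | refl =>
    rintro n hn hr
    cases hn
    exact ⟨s2, SilentReach.refl s2, hr⟩
  | @step u' m hre ht ih =>
    rintro n hn hr
    cases hn
    obtain ⟨z, hz, hrz⟩ := ih u' rfl hr
    rcases hf u' z hrz tau (some n) ht with ⟨_, m2, hre2, h1, h2⟩ | ⟨w, m2, hre2, ht2, h1, h2⟩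
    · cases m2 with
      | none => exact absurd h1 (by simp [OptRel])
      | some w' => exact ⟨w', silentReach_trans hz hre2, h2⟩
    · cases m2 with
      | none => exact absurd h2 (by simp [OptRel])
      | some w2 =>
        exact ⟨w2, SilentReach.step (silentReach_trans hz hre2) ht2, h2⟩

theorem fwd_comp {T : Finset (S × A × Option S)} {tau : A} {R1 R2 : S → S → Prop}
    (h1 : Fwd T tau R1) (h2 : Fwd T tau R2) : Fwd T tau (Relation.Comp R1 R2) := by
  rintro s1 s2 ⟨s, hr1, hr2⟩ ℓ m1 ht
  rcases h1 s1 s hr1 ℓ m1 ht with ⟨hτ, n, hre, ha, hb⟩ | ⟨s', n, hre, ht', ha, hb⟩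
  · cases n with
    | none => exact absurd ha (by simp [OptRel])
    | some n' =>
      obtain ⟨z, hz, hrz⟩ := reach_match h2 hre n' rfl hr2
      refine Or.inl ⟨hτ, some z, hz, optRel_comp (a := some s1) ha hrz, ?_⟩
      cases m1 with
      | none => exact absurd hb (by simp [OptRel])
      | some m10 => exact optRel_comp (a := some m10) hb hrz
  · obtain ⟨z, hz, hrz⟩ := reach_match h2 hre s' rfl hr2
    rcases h2 s' z hrz ℓ n ht' with ⟨hτ, w, hre2, hc, hd⟩ | ⟨w, m2, hre2, ht2, hc, hd⟩
    · cases w with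
      | none => exact absurd hc (by simp [OptRel])
      | some w' =>
        refine Or.inl ⟨hτ, some w', silentReach_trans hz hre2,
          optRel_comp (a := some s1) (b := some s') ha hc, optRel_comp hb hd⟩
    · exact Or.inr ⟨w, m2, silentReach_trans hz hre2, ht2, ⟨s', ha, hc⟩, optRel_comp hb hd⟩

theorem isBB_eq {T : Finset (S × A × Option S)} {tau : A} :
    IsBranchingBisim T tau (Eq : S → S → Prop) := by
  rintro s1 s2 rfl
  constructor <;>
  · intro ℓ m ht
    refine Or.inr ⟨s1, m, SilentReach.refl s1, ht, rfl, ?_⟩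
    cases m <;> simp [OptRel]

theorem bisimilar_refl {T : Finset (S × A × Option S)} {tau : A} (s : S) :
    Bisimilar T tau s s := ⟨Eq, isBB_eq, rfl⟩

theorem bisimilar_symm {T : Finset (S × A × Option S)} {tau : A} {s s' : S}
    (h : Bisimilar T tau s s') : Bisimilar T tau s' s := by
  obtain ⟨R, hR, hr⟩ := h
  exact ⟨flip R, isBB_iff.2 ⟨(isBB_iff.1 hR).2, (isBB_iff.1 hR).1⟩, hr⟩

theorem bisimilar_trans {T : Finset (S × A × Option S)} {tau : A} {s s' s'' : S}
    (h : Bisimilar T tau s s') (h' : Bisimilar T tau s' s'') : Bisimilar T tau s s'' := by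
  obtain ⟨R1, hR1, hr1⟩ := h
  obtain ⟨R2, hR2, hr2⟩ := h'
  refine ⟨Relation.Comp R1 R2, isBB_iff.2 ⟨fwd_comp (isBB_iff.1 hR1).1 (isBB_iff.1 hR2).1, ?_⟩,
    s', hr1, hr2⟩
  exact fwd_congr (fun a b => by
      simp only [Relation.Comp, flip]; exact ⟨fun ⟨x, h1, h2⟩ => ⟨x, h2, h1⟩,
        fun ⟨x, h1, h2⟩ => ⟨x, h2, h1⟩⟩)
    (fwd_comp (isBB_iff.1 hR2).2 (isBB_iff.1 hR1).2)

theorem optRel_bisim_refl {T : Finset (S × A × Option S)} {tau : A} (m : Option S) :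
    OptRel (Bisimilar T tau) m m := by
  cases m <;> simp [OptRel, bisimilar_refl]

theorem optRel_bisim_symm {T : Finset (S × A × Option S)} {tau : A} {m m' : Option S}
    (h : OptRel (Bisimilar T tau) m m') : OptRel (Bisimilar T tau) m' m := by
  cases m <;> cases m' <;> simp_all [OptRel]; exact bisimilar_symm h

theorem optRel_bisim_trans {T : Finset (S × A × Option S)} {tau : A} {m m' m'' : Option S}
    (h : OptRel (Bisimilar T tau) m m') (h' : OptRel (Bisimilar T tau) m' m'') :
    OptRel (Bisimilar T tau) m m'' := by
  cases m <;> cases m' <;> cases m'' <;> simp_all [OptRel]; exact bisimilar_trans h h'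

end Aux

/-- Rooted branching bisimilarity `≈_c` on places is an equivalence relation. -/
theorem rootedBisimilar_equivalence [Fintype S] [Fintype A]
    (T : Finset (S × A × Option S)) (tau : A) :
    Equivalence (RootedBisimilar T tau) := by
  constructor
  · intro s ℓ
    exact ⟨fun m1 h => ⟨m1, h, optRel_bisim_refl m1⟩, fun m2 h => ⟨m2, h, optRel_bisim_refl m2⟩⟩
  · intro x y h ℓ
    constructor
    · intro m1 h1
      obtain ⟨m2, h2, hb⟩ := (h ℓ).2 m1 h1
      exact ⟨m2, h2, optRel_bisim_symm hb⟩
    · intro m2 h2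
      obtain ⟨m1, h1, hb⟩ := (h ℓ).1 m2 h2
      exact ⟨m1, h1, optRel_bisim_symm hb⟩
  · intro x y z hxy hyz ℓ
    constructor
    · intro m1 h1
      obtain ⟨m2, h2, hb⟩ := (hxy ℓ).1 m1 h1
      obtain ⟨m3, h3, hb'⟩ := (hyz ℓ).1 m2 h2
      exact ⟨m3, h3, optRel_bisim_trans hb hb'⟩
    · intro m3 h3
      obtain ⟨m2, h2, hb'⟩ := (hyz ℓ).2 m3 h3
      obtain ⟨m1, h1, hb⟩ := (hxy ℓ).2 m2 h2
      exact ⟨m1, h1, optRel_bisim_trans hb hb'⟩
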